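/- Let $1<p<N$ and $v(x)=|x|^{-\gamma}(1-\delta|x|^{\epsilon})$ with $\gamma,\delta,\epsilon$ real, defined for $x\ne0$ with $1-\delta|x|^\epsilon\ne0$. Then for $x\ne 0$, $-\Delta_p v-\frac{\mu}{|x|^p}|v|^{p-2}v = \frac{h(\delta|x|^\epsilon)}{|1-\delta|x|^\epsilon|^{p-2}(1-\delta|x|^\epsilon)\,|x|^p}\,|v|^{p-2}v$, where $h(t)=|\gamma-(\gamma-\epsilon)t|^{p-2}[k(\gamma-\epsilon)t-k(\gamma)]-\mu|1-t|^{p-2}(1-t)$ and $k(s)=(p-1)s^2-(N-p)s$. -/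

import Mathlib

/-- `k(s) = (p-1)s² - (N-p)s`. -/
def kfun (N p s : ℝ) : ℝ := (p - 1) * s ^ 2 - (N - p) * s

/-- `h(t) = |γ-(γ-ε)t|^(p-2) [k(γ-ε)t - k(γ)] - μ|1-t|^(p-2)(1-t)`. -/
noncomputable def hfun (N p μ γ ε t : ℝ) : ℝ :=
  |γ - (γ - ε) * t| ^ (p - 2) * (kfun N p (γ - ε) * t - kfun N p γ) -
    μ * |1 - t| ^ (p - 2) * (1 - t)

/-- The `p`-Laplacian `Δ_p v = div(|∇v|^(p-2) ∇v)`, written pointwise as the trace of the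
derivative of the vector field `|∇v|^(p-2) ∇v`. -/
noncomputable def pLap (N : ℕ) (p : ℝ) (v : EuclideanSpace ℝ (Fin N) → ℝ)
    (x : EuclideanSpace ℝ (Fin N)) : ℝ :=
  ∑ i : Fin N,
    fderiv ℝ (fun y => (‖gradient v y‖ ^ (p - 2) • gradient v y) i) x
      (EuclideanSpace.single i 1)

/-! For a radial function `v y = f ‖y‖` the gradient is `(f' r / r) • y`, so the flux
`|∇v|^(p-2) ∇v` is the radial field `(φ r / r) • y` with `φ = |f'|^(p-2) f'`, whose divergence is
`φ' r + (N - 1) φ r / r`. For `f r = r^(-γ) (1 - δ r^ε)` and `t = δ r^ε` one has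
`f' r = -r^(-γ-1) (γ - (γ-ε) t)` and `f'' r = r^(-γ-2) (γ (γ+1) - (γ-ε) (γ-ε+1) t)`, and
`(p-1) f'' + (N-1) f' / r` collapses to `r^(-γ-2) (k(γ) - k(γ-ε) t)`. -/

open Topology

lemma hasDerivAt_abs_rpow_mul_self (p : ℝ) {c : ℝ} (hc : c ≠ 0) :
    HasDerivAt (fun t : ℝ => |t| ^ (p - 2) * t) ((p - 1) * |c| ^ (p - 2)) c := by
  refine (((hasDerivAt_abs hc).rpow_const (Or.inl (abs_ne_zero.mpr hc))).mul
    (hasDerivAt_id c)).congr_deriv ?_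
  have hpow : |c| ^ (p - 2 - 1) * |c| = |c| ^ (p - 2) := by
    rw [Real.rpow_sub_one (abs_ne_zero.mpr hc), div_mul_cancel₀ _ (abs_ne_zero.mpr hc)]
  rw [id, ← hpow, ← sign_mul_self c]
  ring

section InnerProductSpace

variable {E : Type*} [NormedAddCommGroup E] [InnerProductSpace ℝ E]

lemma hasFDerivAt_norm_of_ne_zero {x : E} (hx : x ≠ 0) :
    HasFDerivAt (‖·‖) (‖x‖⁻¹ • innerSL ℝ x) x := by
  have hsq : ‖x‖ ^ 2 ≠ 0 := pow_ne_zero 2 (norm_ne_zero_iff.mpr hx)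
  convert (hasStrictFDerivAt_norm_sq x).hasFDerivAt.sqrt hsq using 1
  · ext y
    simp [Real.sqrt_sq (norm_nonneg y)]
  · ext y
    rw [Real.sqrt_sq (norm_nonneg x)]
    simp only [smul_apply, coe_innerSL_apply, smul_eq_mul, nsmul_eq_mul, Nat.cast_ofNat]
    field_simp

lemma hasGradientAt_comp_norm [CompleteSpace E] {f : ℝ → ℝ} {f' : ℝ} {x : E} (hx : x ≠ 0)
    (hf : HasDerivAt f f' ‖x‖) :
    HasGradientAt (fun y => f ‖y‖) ((f' / ‖x‖) • x) x := by
  rw [hasGradientAt_iff_hasFDerivAt]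
  refine (hf.comp_hasFDerivAt x (hasFDerivAt_norm_of_ne_zero hx)).congr_fderiv ?_
  ext y
  simp [div_eq_mul_inv, mul_assoc]

end InnerProductSpace

section Divergence

variable {ι : Type*} [Fintype ι] [DecidableEq ι]

noncomputable def divergence (W : EuclideanSpace ℝ ι → EuclideanSpace ℝ ι)
    (x : EuclideanSpace ℝ ι) : ℝ :=
  ∑ i, fderiv ℝ (fun y => W y i) x (EuclideanSpace.single i 1)

lemma divergence_eq_of_eventuallyEq_radial {W : EuclideanSpace ℝ ι → EuclideanSpace ℝ ι}
    {g : ℝ → ℝ} {g' : ℝ} {x : EuclideanSpace ℝ ι} (hx : x ≠ 0)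
    (hW : W =ᶠ[𝓝 x] fun y => g ‖y‖ • y) (hg : HasDerivAt g g' ‖x‖) :
    divergence W x = g' * ‖x‖ + Fintype.card ι * g ‖x‖ := by
  have hcoord : ∀ i, fderiv ℝ (fun y => W y i) x (EuclideanSpace.single i 1)
      = g' / ‖x‖ * x i ^ 2 + g ‖x‖ := by
    intro i
    have hWi : (fun y => W y i) =ᶠ[𝓝 x] fun y => g ‖y‖ * y i :=
      hW.mono fun y hy => by simp [hy]
    have hd : HasFDerivAt (fun y : EuclideanSpace ℝ ι => g ‖y‖ * y i) _ x :=
      (hg.comp_hasFDerivAt x (hasFDerivAt_norm_of_ne_zero hx)).mul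
        (EuclideanSpace.proj i : EuclideanSpace ℝ ι →L[ℝ] ℝ).hasFDerivAt
    rw [hWi.fderiv_eq, hd.fderiv]
    simp only [Function.comp_apply, add_apply,
      smul_apply, PiLp.proj_apply, PiLp.single_eq_same, smul_eq_mul,
      coe_innerSL_apply, EuclideanSpace.inner_single_right, Real.ringHom_apply]
    ring
  have hx' : ‖x‖ ≠ 0 := norm_ne_zero_iff.mpr hx
  simp only [divergence, hcoord, Finset.sum_add_distrib, ← Finset.mul_sum,
    ← EuclideanSpace.real_norm_sq_eq, Finset.sum_const, Finset.card_univ, nsmul_eq_mul]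
  field_simp

end Divergence

lemma pLap_eq_divergence (N : ℕ) (p : ℝ) (v : EuclideanSpace ℝ (Fin N) → ℝ)
    (x : EuclideanSpace ℝ (Fin N)) :
    pLap N p v x = divergence (fun y => ‖gradient v y‖ ^ (p - 2) • gradient v y) x :=
  rfl

lemma pLap_comp_norm {N : ℕ} (p : ℝ) {f f' : ℝ → ℝ} {f'' : ℝ} {x : EuclideanSpace ℝ (Fin N)}
    (hx : x ≠ 0) (hf : ∀ᶠ r in 𝓝 ‖x‖, HasDerivAt f (f' r) r) (hf' : HasDerivAt f' f'' ‖x‖)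
    (hf'x : f' ‖x‖ ≠ 0) :
    pLap N p (fun y => f ‖y‖) x =
      (p - 1) * |f' ‖x‖| ^ (p - 2) * f'' + (N - 1) / ‖x‖ * (|f' ‖x‖| ^ (p - 2) * f' ‖x‖) := by
  have hflux : (fun y => ‖gradient (fun z => f ‖z‖) y‖ ^ (p - 2) • gradient (fun z => f ‖z‖) y)
      =ᶠ[𝓝 x] fun y => (|f' ‖y‖| ^ (p - 2) * f' ‖y‖ / ‖y‖) • y := by
    filter_upwards [(continuous_norm.tendsto x).eventually hf, isOpen_ne.mem_nhds hx]
      with y hfy hy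
    rw [(hasGradientAt_comp_norm hy hfy).gradient, norm_smul, norm_div, norm_norm,
      div_mul_cancel₀ _ (norm_ne_zero_iff.mpr hy), Real.norm_eq_abs, smul_smul, mul_div_assoc]
  have hg : HasDerivAt (fun r => |f' r| ^ (p - 2) * f' r / r)
      (((p - 1) * |f' ‖x‖| ^ (p - 2) * f'' * ‖x‖ - |f' ‖x‖| ^ (p - 2) * f' ‖x‖ * 1) / ‖x‖ ^ 2)
      ‖x‖ :=
    ((hasDerivAt_abs_rpow_mul_self p hf'x).comp _ hf').div (hasDerivAt_id _)
      (norm_ne_zero_iff.mpr hx)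
  rw [pLap_eq_divergence, divergence_eq_of_eventuallyEq_radial hx hflux hg, Fintype.card_fin]
  have hx' : ‖x‖ ≠ 0 := norm_ne_zero_iff.mpr hx
  field_simp
  ring

lemma hasDerivAt_rpow_mul_one_sub_mul_rpow (γ δ ε : ℝ) {r : ℝ} (hr : 0 < r) :
    HasDerivAt (fun ρ => ρ ^ (-γ) * (1 - δ * ρ ^ ε))
      (-(r ^ (-γ) * (γ - (γ - ε) * (δ * r ^ ε))) / r) r := by
  have hγ := Real.hasDerivAt_rpow_const (p := -γ) (Or.inl hr.ne')
  have hε := Real.hasDerivAt_rpow_const (p := ε) (Or.inl hr.ne')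
  refine (hγ.mul ((hε.const_mul δ).const_sub 1)).congr_deriv ?_
  rw [Real.rpow_sub_one hr.ne', Real.rpow_sub_one hr.ne']
  field_simp
  ring

lemma hasDerivAt_rpow_mul_one_sub_mul_rpow_deriv (γ δ ε : ℝ) {r : ℝ} (hr : 0 < r) :
    HasDerivAt (fun ρ => -(ρ ^ (-γ) * (γ - (γ - ε) * (δ * ρ ^ ε))) / ρ)
      (r ^ (-γ) * (γ * (γ + 1) - (γ - ε) * (γ - ε + 1) * (δ * r ^ ε)) / r ^ 2) r := by
  have hγ := Real.hasDerivAt_rpow_const (p := -γ) (Or.inl hr.ne')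
  have hε := Real.hasDerivAt_rpow_const (p := ε) (Or.inl hr.ne')
  refine ((hγ.mul (((hε.const_mul δ).const_mul (γ - ε)).const_sub γ)).neg.div
    (hasDerivAt_id r) hr.ne').congr_deriv ?_
  simp only [Pi.neg_apply, Pi.mul_apply, id]
  rw [Real.rpow_sub_one hr.ne', Real.rpow_sub_one hr.ne']
  field_simp
  ring

theorem radial_supersolution_computation_general (N : ℕ) (p μ γ δ ε : ℝ)
    (x : EuclideanSpace ℝ (Fin N)) (hx : x ≠ 0)
    (hv : (1 : ℝ) - δ * ‖x‖ ^ ε ≠ 0)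
    (hgrad : gradient (fun y : EuclideanSpace ℝ (Fin N) =>
        ‖y‖ ^ (-γ) * (1 - δ * ‖y‖ ^ ε)) x ≠ 0) :
    -pLap N p (fun y : EuclideanSpace ℝ (Fin N) => ‖y‖ ^ (-γ) * (1 - δ * ‖y‖ ^ ε)) x -
        μ / ‖x‖ ^ p * |‖x‖ ^ (-γ) * (1 - δ * ‖x‖ ^ ε)| ^ (p - 2) *
          (‖x‖ ^ (-γ) * (1 - δ * ‖x‖ ^ ε)) =
      hfun N p μ γ ε (δ * ‖x‖ ^ ε) /
          (|1 - δ * ‖x‖ ^ ε| ^ (p - 2) * (1 - δ * ‖x‖ ^ ε) * ‖x‖ ^ p) *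
        (|‖x‖ ^ (-γ) * (1 - δ * ‖x‖ ^ ε)| ^ (p - 2) *
          (‖x‖ ^ (-γ) * (1 - δ * ‖x‖ ^ ε))) := by
  have hr : 0 < ‖x‖ := norm_pos_iff.mpr hx
  have hf : ∀ᶠ r in 𝓝 ‖x‖, HasDerivAt (fun ρ => ρ ^ (-γ) * (1 - δ * ρ ^ ε))
      (-(r ^ (-γ) * (γ - (γ - ε) * (δ * r ^ ε))) / r) r :=
    eventually_gt_nhds hr |>.mono fun r => hasDerivAt_rpow_mul_one_sub_mul_rpow γ δ ε
  have hf'x : -(‖x‖ ^ (-γ) * (γ - (γ - ε) * (δ * ‖x‖ ^ ε))) / ‖x‖ ≠ 0 := fun h => hgrad <| by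
    rw [(hasGradientAt_comp_norm hx hf.self_of_nhds).gradient, h, zero_div, zero_smul]
  rw [pLap_comp_norm p hx hf (hasDerivAt_rpow_mul_one_sub_mul_rpow_deriv γ δ ε hr) hf'x]
  have hA : 0 < ‖x‖ ^ (-γ) := Real.rpow_pos_of_pos hr _
  have hp : 0 < ‖x‖ ^ p := Real.rpow_pos_of_pos hr _
  have hb : 0 < |1 - δ * ‖x‖ ^ ε| ^ (p - 2) := Real.rpow_pos_of_pos (abs_pos.mpr hv) _
  -- factor `‖x‖ ^ (-γ)` out of `|f'|` and `|v|`, and `‖x‖ ^ p / ‖x‖ ^ 2` out of `‖x‖ ^ (p - 2)`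
  rw [abs_mul, abs_div, abs_neg, abs_mul, abs_of_pos hA, abs_of_pos hr,
    Real.div_rpow (by positivity) hr.le, Real.mul_rpow hA.le (abs_nonneg _),
    Real.mul_rpow hA.le (abs_nonneg _), Real.rpow_sub hr, Real.rpow_two]
  unfold hfun kfun
  field_simp
  ring

theorem radial_supersolution_computation (N : ℕ) (hN : 2 ≤ N) (p μ γ δ ε : ℝ)
    (hp : 1 < p) (hpN : p < (N : ℝ)) (hμ0 : 0 ≤ μ)
    (x : EuclideanSpace ℝ (Fin N)) (hx : x ≠ 0)
    (hv : (1 : ℝ) - δ * ‖x‖ ^ ε ≠ 0)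
    (hgrad : gradient (fun y : EuclideanSpace ℝ (Fin N) =>
        ‖y‖ ^ (-γ) * (1 - δ * ‖y‖ ^ ε)) x ≠ 0) :
    -pLap N p (fun y : EuclideanSpace ℝ (Fin N) => ‖y‖ ^ (-γ) * (1 - δ * ‖y‖ ^ ε)) x -
        μ / ‖x‖ ^ p * |‖x‖ ^ (-γ) * (1 - δ * ‖x‖ ^ ε)| ^ (p - 2) *
          (‖x‖ ^ (-γ) * (1 - δ * ‖x‖ ^ ε)) =
      hfun N p μ γ ε (δ * ‖x‖ ^ ε) /
          (|1 - δ * ‖x‖ ^ ε| ^ (p - 2) * (1 - δ * ‖x‖ ^ ε) * ‖x‖ ^ p) *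
        (|‖x‖ ^ (-γ) * (1 - δ * ‖x‖ ^ ε)| ^ (p - 2) *
          (‖x‖ ^ (-γ) * (1 - δ * ‖x‖ ^ ε))) :=
  radial_supersolution_computation_general N p μ γ δ ε x hx hv hgrad
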